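/- arXiv:1403.3630 — 2 statements merged into one kernel-verified Lean document; each statement's English description precedes it below -/
import Mathlib

section
/- For any even integer n ≥ 4, the Euler identity holds: -(n+1)·B_n = Σ_{k=2}^{n-2} C(n,k)·B_k·B_{n-k}, where B_k are the Bernoulli numbers. -/
/-!
Writing `B(X) = X / (eˣ - 1)` for the exponential generating function of the Bernoulli numbers,
differentiating `B · (eˣ - 1) = X` and eliminating `eˣ` gives the Riccati equation
`B² = (1 - X) B - X B'`. Comparing coefficients of `Xⁿ / n!` yields
`∑ₖ C(n,k) Bₖ Bₙ₋ₖ = (1 - n) Bₙ - n Bₙ₋₁`; for even `n ≥ 4` the term `Bₙ₋₁` vanishes, and the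
terms `k = 0, 1, n - 1, n` of the convolution contribute `2 Bₙ`.
-/

open PowerSeries Finset Nat

theorem Finset.sum_range_succ_eq_ends_add_sum_Icc {M : Type*} [AddCommMonoid M] (f : ℕ → M)
    {n : ℕ} (hn : 3 ≤ n) :
    ∑ k ∈ range (n + 1), f k = f 0 + (f 1 + (f (n - 1) + (f n + ∑ k ∈ Icc 2 (n - 2), f k))) := by
  have hsplit : range (n + 1) = insert 0 (insert 1 (insert (n - 1) (insert n (Icc 2 (n - 2))))) := by
    ext k
    simp only [mem_range, mem_insert, mem_Icc]
    omega
  rw [hsplit, sum_insert (by simp; omega), sum_insert (by simp; omega),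
    sum_insert (by simp; omega), sum_insert (by simp; omega)]

namespace PowerSeries

theorem coeff_mk_div_factorial_mul_mk_div_factorial {K : Type*} [Field K] [CharZero K]
    (a b : ℕ → K) (n : ℕ) :
    coeff n (mk (fun k => a k / k !) * mk (fun k => b k / k !)) =
      (∑ k ∈ range (n + 1), (n.choose k : K) * a k * b (n - k)) / n ! := by
  rw [coeff_mul, Nat.sum_antidiagonal_eq_sum_range_succ_mk, sum_div]
  refine sum_congr rfl fun k hk => ?_
  rw [coeff_mk, coeff_mk, Nat.cast_choose K (Nat.lt_succ_iff.mp (mem_range.mp hk))]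
  have hfac : (n ! : K) ≠ 0 := Nat.cast_ne_zero.mpr n.factorial_ne_zero
  field_simp

theorem bernoulliPowerSeries_sq (A : Type*) [CommRing A] [Algebra ℚ A] :
    bernoulliPowerSeries A ^ 2 =
      bernoulliPowerSeries A - X * bernoulliPowerSeries A - X * d⁄dX A (bernoulliPowerSeries A) := by
  set B := bernoulliPowerSeries A
  have hB : B * (exp A - 1) = X := bernoulliPowerSeries_mul_exp_sub_one A
  have hB' : d⁄dX A B * (exp A - 1) + B * exp A = 1 := by
    have h := congrArg (d⁄dX A) hB
    rw [Derivation.leibniz, smul_eq_mul, smul_eq_mul, map_sub, derivative_exp,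
      Derivation.map_one_eq_zero, sub_zero, derivative_X] at h
    linear_combination h
  linear_combination (-(B + d⁄dX A B)) * hB + B * hB'

end PowerSeries

theorem sum_range_choose_mul_bernoulli_mul_bernoulli (n : ℕ) :
    ∑ k ∈ range (n + 1), (n.choose k : ℚ) * bernoulli k * bernoulli (n - k) =
      (1 - n) * bernoulli n - n * bernoulli (n - 1) := by
  rcases n with _ | m
  · simp
  have h := congrArg (coeff (m + 1)) (bernoulliPowerSeries_sq ℚ)
  have hB : bernoulliPowerSeries ℚ = mk fun k => bernoulli k / k ! := rfl
  rw [sq, hB, coeff_mk_div_factorial_mul_mk_div_factorial, map_sub, map_sub,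
    coeff_succ_X_mul, coeff_succ_X_mul, coeff_derivative, coeff_mk, coeff_mk,
    div_eq_iff (by positivity)] at h
  rw [h, Nat.add_sub_cancel, Nat.factorial_succ]
  push_cast
  field_simp
  ring

/-- Euler's identity for Bernoulli numbers: for even `n ≥ 4`,
`-(n+1)·B_n = ∑_{k=2}^{n-2} C(n,k)·B_k·B_{n-k}`. -/
theorem euler_identity (n : ℕ) (hn : Even n) (h4 : 4 ≤ n) :
    -((n : ℚ) + 1) * bernoulli n =
      ∑ k ∈ Finset.Icc 2 (n - 2), (n.choose k : ℚ) * bernoulli k * bernoulli (n - k) := by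
  have hodd : bernoulli (n - 1) = 0 :=
    bernoulli_eq_zero_of_odd (Nat.Even.sub_odd (by omega) hn odd_one) (by omega)
  have h := sum_range_choose_mul_bernoulli_mul_bernoulli n
  rw [sum_range_succ_eq_ends_add_sum_Icc _ (by omega)] at h
  simp only [Nat.choose_zero_right, Nat.choose_self, Nat.sub_zero, Nat.sub_self,
    Nat.sub_sub_self (by omega : 1 ≤ n), bernoulli_zero, hodd, mul_zero, zero_mul] at h
  push_cast at h
  linarith
end

section
/- For any even integer n ≥ 4, Miki's identity holds: 2·H_n·B_n = Σ_{k=2}^{n-2} (n/(k(n-k)))·(1 - C(n,k))·B_k·B_{n-k}, where H_n = Σ_{j=1}^n 1/j is the n-th harmonic number. -/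
/-!
Gessel's proof. For fixed `n`, the Stirling number `S(n + k, k)` is a polynomial in `k` in two
ways. It is the `X^n` coefficient of `∏_{j=1}^k (1 - jX)⁻¹ = exp (∑_m p_m(k) X^m / m)`, where
`p_m(k) = ∑_{j=1}^k j^m` is a Faulhaber polynomial; and it is `(k + 1) ⋯ (k + n)` times the `X^n`
coefficient of `((e^X - 1) / X)^k = exp (k · ∑_m B'_m X^m / (m · m!))`. Comparing the
coefficients of `k^2` of the two polynomials gives, for every `n ≥ 1`,
`B'_{n-1} + ∑_{i+j=n} (1 - C(n,i)) (B'_i / i) (B'_j / j) = 2 H_n B'_n / n`,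
and `B'_{n-1} = 0` for even `n ≥ 4`.
-/

open Finset Nat

theorem Polynomial.coeff_one_mul {K : Type*} [CommSemiring K] (p q : Polynomial K) :
    (p * q).coeff 1 = p.coeff 0 * q.coeff 1 + p.coeff 1 * q.coeff 0 := by
  simp [Polynomial.coeff_mul, Nat.sum_antidiagonal_eq_sum_range_succ_mk, sum_range_succ]

theorem Polynomial.coeff_two_mul {K : Type*} [CommSemiring K] (p q : Polynomial K) :
    (p * q).coeff 2 = p.coeff 0 * q.coeff 2 + p.coeff 1 * q.coeff 1 + p.coeff 2 * q.coeff 0 := by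
  simp [Polynomial.coeff_mul, Nat.sum_antidiagonal_eq_sum_range_succ_mk, sum_range_succ]

theorem Finset.Nat.sum_antidiagonal_eq_sum_Icc {M : Type*} [AddCommMonoid M] {n : ℕ}
    {g : ℕ × ℕ → M} (hg : ∀ p ∈ antidiagonal n, p.1 ≤ 1 ∨ p.2 ≤ 1 → g p = 0) :
    ∑ p ∈ antidiagonal n, g p = ∑ k ∈ Icc 2 (n - 2), g (k, n - k) := by
  rw [Nat.sum_antidiagonal_eq_sum_range_succ_mk]
  refine (sum_subset (fun k hk => ?_) fun k hk hk' => hg _ ?_ ?_).symm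
  · simp only [mem_Icc, mem_range] at hk ⊢
    omega
  · simp only [HasAntidiagonal.mem_antidiagonal, mem_range] at hk ⊢
    omega
  · simp only [mem_Icc, mem_range] at hk hk'
    omega

namespace PowerSeries

theorem coeff_pow_eq_zero_of_lt {R : Type*} [CommSemiring R] {M : R⟦X⟧}
    (hM : constantCoeff M = 0) {n m : ℕ} (h : n < m) : coeff n (M ^ m) = 0 :=
  X_pow_dvd_iff.mp (pow_dvd_pow_of_dvd (X_dvd_iff.mpr hM) m) n h

section ExpSubst

variable {R : Type*} [CommRing R] [Algebra ℚ R] {M : R⟦X⟧}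

theorem coeff_exp_subst (hM : constantCoeff M = 0) {n N : ℕ} (hN : n < N) :
    coeff n ((exp R).subst M) = ∑ m ∈ range N, (m ! : ℚ)⁻¹ • coeff n (M ^ m) := by
  rw [coeff_subst' (HasSubst.of_constantCoeff_zero' hM),
    finsum_eq_sum_of_support_subset _ (s := range N) <| Function.support_subset_iff'.mpr
      fun m hm => by simp [coeff_pow_eq_zero_of_lt hM (lt_of_lt_of_le hN (by simpa using hm))]]
  refine sum_congr rfl fun m _ => ?_
  rw [coeff_exp, smul_eq_mul, ← Algebra.smul_def, one_div]

theorem constantCoeff_exp_subst (hM : constantCoeff M = 0) :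
    constantCoeff ((exp R).subst M) = 1 := by
  rw [← coeff_zero_eq_constantCoeff_apply, coeff_exp_subst hM zero_lt_one]
  simp

theorem derivative_exp_subst (hM : constantCoeff M = 0) :
    d⁄dX R ((exp R).subst M) = (exp R).subst M * d⁄dX R M := by
  rw [derivative_subst (HasSubst.of_constantCoeff_zero' hM), derivative_exp]

theorem map_exp_subst {S : Type*} [CommRing S] [Algebra ℚ S] (f : R →+* S)
    (hM : constantCoeff M = 0) : map f ((exp R).subst M) = (exp S).subst (map f M) := by
  have h := map_subst (HasSubst.of_constantCoeff_zero' hM) (h := f) (exp R)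
  rwa [map_exp] at h

end ExpSubst

theorem eq_of_derivative_eq_mul {R : Type*} [CommRing R] [IsAddTorsionFree R] {P F G : R⟦X⟧}
    (h0 : constantCoeff F = constantCoeff G) (hF : d⁄dX R F = F * P) (hG : d⁄dX R G = G * P) :
    F = G := by
  ext n
  induction n using Nat.strong_induction_on with
  | _ n ih =>
    match n with
    | 0 => simpa using h0
    | n + 1 =>
      refine IsAddTorsionFree.nsmul_right_injective n.succ_ne_zero ?_
      show (n + 1) • coeff (n + 1) F = (n + 1) • coeff (n + 1) G
      rw [nsmul_eq_mul', nsmul_eq_mul', Nat.cast_succ, ← coeff_derivative, ← coeff_derivative,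
        hF, hG, coeff_mul, coeff_mul]
      exact sum_congr rfl fun p hp => by
        rw [ih p.1 (Finset.Nat.antidiagonal.fst_lt hp)]

section ExpSubstODE

variable {R : Type*} [CommRing R] [Algebra ℚ R] [IsAddTorsionFree R] {M : R⟦X⟧}

theorem eq_exp_subst_of_derivative_eq_mul (hM : constantCoeff M = 0) {F : R⟦X⟧}
    (h0 : constantCoeff F = 1) (hF : d⁄dX R F = F * d⁄dX R M) : F = (exp R).subst M :=
  eq_of_derivative_eq_mul (h0.trans (constantCoeff_exp_subst hM).symm) hF
    (derivative_exp_subst hM)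

theorem exp_subst_add {N : R⟦X⟧} (hM : constantCoeff M = 0) (hN : constantCoeff N = 0) :
    (exp R).subst (M + N) = (exp R).subst M * (exp R).subst N := by
  refine (eq_exp_subst_of_derivative_eq_mul ?_ ?_ ?_).symm
  · simp [hM, hN]
  · simp [constantCoeff_exp_subst, hM, hN]
  · rw [Derivation.leibniz, derivative_exp_subst hM, derivative_exp_subst hN, map_add]
    simp only [smul_eq_mul]
    ring

theorem exp_subst_sum {ι : Type*} (s : Finset ι) {f : ι → R⟦X⟧}
    (hf : ∀ i ∈ s, constantCoeff (f i) = 0) :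
    (exp R).subst (∑ i ∈ s, f i) = ∏ i ∈ s, (exp R).subst (f i) := by
  induction s using Finset.cons_induction with
  | empty => simp [subst_zero_eq_C_constantCoeff]
  | cons a s ha ih =>
    have hs : ∀ i ∈ s, constantCoeff (f i) = 0 := fun i hi => hf i (mem_cons_of_mem hi)
    rw [sum_cons, prod_cons, exp_subst_add (hf a (mem_cons_self a s))
      (by rw [map_sum]; exact sum_eq_zero hs), ih hs]

theorem exp_subst_nsmul (hM : constantCoeff M = 0) (k : ℕ) :
    (exp R).subst (k • M) = (exp R).subst M ^ k := by
  rw [← card_range k, ← sum_const, exp_subst_sum _ fun _ _ => hM, prod_const]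

end ExpSubstODE

section PolynomialCoeff

variable {K : Type*} [CommRing K] {M : (Polynomial K)⟦X⟧}

theorem coeff_coeff_pow_eq_zero_of_lt (hM : ∀ j, (coeff j M).coeff 0 = 0) {r m : ℕ} (h : r < m)
    (n : ℕ) : (coeff n (M ^ m)).coeff r = 0 := by
  have hdvd : ∀ m n, Polynomial.X ^ m ∣ coeff n (M ^ m) := by
    intro m
    induction m with
    | zero => simp
    | succ m ih =>
      intro n
      rw [pow_succ M, coeff_mul, pow_succ]
      exact dvd_sum fun p _ => mul_dvd_mul (ih p.1) (Polynomial.X_dvd_iff.mpr (hM p.2))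
  obtain ⟨q, hq⟩ := hdvd m n
  rw [hq, mul_comm, Polynomial.coeff_mul_X_pow', if_neg (by omega)]

theorem coeff_coeff_one_eq_zero {r : ℕ} (hr : r ≠ 0) (n : ℕ) :
    (coeff n (1 : (Polynomial K)⟦X⟧)).coeff r = 0 := by
  rw [coeff_one]
  split_ifs <;> simp [Polynomial.coeff_one, hr]

variable [Algebra ℚ K]

theorem coeff_coeff_exp_subst (hM0 : constantCoeff M = 0) (hM : ∀ j, (coeff j M).coeff 0 = 0)
    (n r : ℕ) : (coeff n ((exp (Polynomial K)).subst M)).coeff r =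
      ∑ m ∈ range (r + 1), (m ! : ℚ)⁻¹ • (coeff n (M ^ m)).coeff r := by
  rw [coeff_exp_subst hM0 (Nat.lt_succ_of_le (le_max_left n r)), Polynomial.finsetSum_coeff]
  refine (sum_subset (range_subset_range.mpr (by omega)) fun m _ hm => ?_).symm
  rw [Polynomial.coeff_smul, coeff_coeff_pow_eq_zero_of_lt hM (by simpa using hm), smul_zero]

theorem coeff_zero_coeff_exp_subst (hM0 : constantCoeff M = 0) (hM : ∀ j, (coeff j M).coeff 0 = 0)
    {n : ℕ} (hn : n ≠ 0) : (coeff n ((exp (Polynomial K)).subst M)).coeff 0 = 0 := by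
  simp [coeff_coeff_exp_subst hM0 hM, coeff_one, hn]

theorem coeff_one_coeff_exp_subst (hM0 : constantCoeff M = 0) (hM : ∀ j, (coeff j M).coeff 0 = 0)
    (n : ℕ) : (coeff n ((exp (Polynomial K)).subst M)).coeff 1 = (coeff n M).coeff 1 := by
  rw [coeff_coeff_exp_subst hM0 hM, sum_range_succ, sum_range_one, pow_zero, pow_one,
    coeff_coeff_one_eq_zero one_ne_zero]
  simp

theorem coeff_two_coeff_exp_subst (hM0 : constantCoeff M = 0) (hM : ∀ j, (coeff j M).coeff 0 = 0)
    (n : ℕ) : (coeff n ((exp (Polynomial K)).subst M)).coeff 2 = (coeff n M).coeff 2 +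
      (2 : ℚ)⁻¹ • ∑ p ∈ antidiagonal n, (coeff p.1 M).coeff 1 * (coeff p.2 M).coeff 1 := by
  rw [coeff_coeff_exp_subst hM0 hM, sum_range_succ, sum_range_succ, sum_range_one, pow_zero,
    pow_one, coeff_coeff_one_eq_zero two_ne_zero, sq, coeff_mul, Polynomial.finsetSum_coeff]
  simp [Polynomial.coeff_two_mul, hM]

end PolynomialCoeff

end PowerSeries

namespace Miki

open PowerSeries

noncomputable def geom (c : ℚ) : ℚ⟦X⟧ := mk fun m => c ^ m

/-- `-log (1 - cX)`; the constant coefficient is `c ^ 0 / 0 = 0`. -/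
noncomputable def logGeom (c : ℚ) : ℚ⟦X⟧ := mk fun m => c ^ m / m

theorem geom_mul_one_sub (c : ℚ) : geom c * (1 - C c * X) = 1 := by
  ext n
  rw [mul_sub, mul_one, map_sub, mul_left_comm, coeff_C_mul]
  cases n with
  | zero => simp [geom]
  | succ n => simp [geom, pow_succ, mul_comm]

theorem coeff_succ_mul_geom (F : ℚ⟦X⟧) (c : ℚ) (n : ℕ) :
    coeff (n + 1) (F * geom c) = coeff (n + 1) F + c * coeff n (F * geom c) := by
  have h := congrArg (coeff (n + 1)) (congrArg (F * ·) (geom_mul_one_sub c))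
  rw [← mul_assoc, mul_sub, mul_one, ← mul_assoc, map_sub, coeff_succ_mul_X, mul_comm _ (C c),
    coeff_C_mul, mul_one] at h
  linear_combination h

theorem coeff_prod_geom (n k : ℕ) :
    coeff n (∏ j ∈ range k, geom (j + 1)) = stirlingSecond (n + k) k := by
  induction k generalizing n with
  | zero => cases n <;> simp [coeff_one]
  | succ k ihk =>
    induction n with
    | zero => simp [stirlingSecond_self, ← coeff_zero_eq_constantCoeff_apply, geom]
    | succ n ihn =>
      rw [prod_range_succ, coeff_succ_mul_geom, ihk, ← prod_range_succ, ihn,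
        show n + 1 + (k + 1) = n + k + 1 + 1 by omega, stirlingSecond_succ_succ,
        add_right_comm n 1 k, ← add_assoc]
      push_cast
      ring

theorem derivative_logGeom (c : ℚ) : d⁄dX ℚ (logGeom c) = C c * geom c := by
  ext n
  rw [coeff_derivative, coeff_C_mul, logGeom, geom, coeff_mk, coeff_mk]
  field_simp
  push_cast
  ring

theorem geom_eq_exp_subst (c : ℚ) : geom c = (exp ℚ).subst (logGeom c) := by
  refine eq_exp_subst_of_derivative_eq_mul (by simp [logGeom]) (by simp [geom]) ?_
  have h : d⁄dX ℚ (geom c) * (1 - C c * X) = geom c * C c := by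
    have h := congrArg (d⁄dX ℚ) (geom_mul_one_sub c)
    simp only [Derivation.leibniz, map_sub, Derivation.map_one_eq_zero, derivative_X,
      derivative_C, smul_eq_mul] at h
    linear_combination h
  calc d⁄dX ℚ (geom c) = d⁄dX ℚ (geom c) * (geom c * (1 - C c * X)) := by
        rw [geom_mul_one_sub, mul_one]
    _ = geom c * d⁄dX ℚ (logGeom c) := by
        rw [derivative_logGeom, ← mul_assoc, mul_comm _ (geom c), mul_assoc, h]
        ring

noncomputable def powerSumPoly (m : ℕ) : Polynomial ℚ :=
  ∑ i ∈ range (m + 1),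
    Polynomial.C (bernoulli' i * (m + 1).choose i / (m + 1)) * Polynomial.X ^ (m + 1 - i)

theorem eval_powerSumPoly (m k : ℕ) :
    (powerSumPoly m).eval (k : ℚ) = ∑ j ∈ range k, ((j : ℚ) + 1) ^ m := by
  have h := sum_Ico_pow k m
  rw [sum_Ico_eq_sum_range, Nat.add_sub_cancel] at h
  simp only [powerSumPoly, Polynomial.eval_finsetSum, Polynomial.eval_mul, Polynomial.eval_C,
    Polynomial.eval_pow, Polynomial.eval_X]
  convert h.symm using 2 with j _ i _ <;> push_cast <;> ring

theorem coeff_powerSumPoly {m r : ℕ} (hr : r ∈ Icc 1 (m + 1)) :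
    (powerSumPoly m).coeff r = bernoulli' (m + 1 - r) * (m + 1).choose r / (m + 1) := by
  rw [mem_Icc] at hr
  rw [powerSumPoly, Polynomial.finsetSum_coeff, sum_eq_single (m + 1 - r)]
  · rw [Polynomial.coeff_C_mul_X_pow, if_pos (by omega), Nat.choose_symm (by omega)]
  · intro i hi hne
    rw [Polynomial.coeff_C_mul_X_pow, if_neg (by simp at hi; omega)]
  · intro h
    exact absurd (mem_range.mpr (by omega)) h

theorem coeff_zero_powerSumPoly (m : ℕ) : (powerSumPoly m).coeff 0 = 0 := by
  rw [powerSumPoly, Polynomial.finsetSum_coeff]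
  exact sum_eq_zero fun i hi => by
    rw [Polynomial.coeff_C_mul_X_pow, if_neg (by simp at hi; omega)]

theorem coeff_one_powerSumPoly (m : ℕ) : (powerSumPoly m).coeff 1 = bernoulli' m := by
  rw [coeff_powerSumPoly (by simp), Nat.choose_one_right, Nat.add_sub_cancel]
  push_cast
  field_simp

theorem coeff_two_powerSumPoly {m : ℕ} (hm : 1 ≤ m) :
    (powerSumPoly m).coeff 2 = m / 2 * bernoulli' (m - 1) := by
  rw [coeff_powerSumPoly (by simp; omega), Nat.cast_choose_two, show m + 1 - 2 = m - 1 by omega]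
  field_simp
  push_cast
  ring

/-- `log ∏_{j=1}^t (1 - jX)⁻¹`, a power series whose coefficients are polynomials in `t`. -/
noncomputable def powerSumLog : (Polynomial ℚ)⟦X⟧ :=
  mk fun m => Polynomial.C (m : ℚ)⁻¹ * powerSumPoly m

theorem constantCoeff_powerSumLog : constantCoeff powerSumLog = 0 := by
  simp [powerSumLog, ← coeff_zero_eq_constantCoeff_apply]

theorem map_eval_powerSumLog (k : ℕ) :
    map (Polynomial.evalRingHom (k : ℚ)) powerSumLog = ∑ j ∈ range k, logGeom (j + 1) := by
  ext m
  simp [powerSumLog, logGeom, eval_powerSumPoly, mul_sum, div_eq_inv_mul]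

theorem eval_coeff_exp_subst_powerSumLog (n k : ℕ) :
    (coeff n ((exp (Polynomial ℚ)).subst powerSumLog)).eval (k : ℚ) = stirlingSecond (n + k) k := by
  rw [← Polynomial.coe_evalRingHom, ← coeff_map, map_exp_subst _ constantCoeff_powerSumLog,
    map_eval_powerSumLog, exp_subst_sum _ fun j _ => by simp [logGeom], ← coeff_prod_geom]
  simp_rw [geom_eq_exp_subst]

noncomputable def expSubOneDivX : ℚ⟦X⟧ := mk fun n => ((n + 1)! : ℚ)⁻¹

/-- The constant coefficient is `B'_0 / 0 = 0`. -/
noncomputable def logExpSubOneDivX : ℚ⟦X⟧ := mk fun n => bernoulli' n / (n * n !)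

theorem X_mul_expSubOneDivX : X * expSubOneDivX = exp ℚ - 1 := by
  ext n
  rw [mul_comm]
  cases n <;> simp [expSubOneDivX, coeff_succ_mul_X]

theorem X_mul_derivative_logExpSubOneDivX :
    X * d⁄dX ℚ logExpSubOneDivX = bernoulli'PowerSeries ℚ - 1 := by
  ext n
  cases n with
  | zero => simp [bernoulli'PowerSeries]
  | succ n =>
    simp only [logExpSubOneDivX, bernoulli'PowerSeries, coeff_succ_X_mul, coeff_derivative,
      coeff_mk, map_sub, coeff_one, Algebra.algebraMap_self, RingHom.id_apply, factorial_succ,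
      if_neg n.succ_ne_zero, sub_zero]
    push_cast
    field_simp

theorem derivative_expSubOneDivX :
    d⁄dX ℚ expSubOneDivX = expSubOneDivX * d⁄dX ℚ logExpSubOneDivX := by
  have hE : X * d⁄dX ℚ expSubOneDivX = exp ℚ - expSubOneDivX := by
    have h := congrArg (d⁄dX ℚ) X_mul_expSubOneDivX
    simp only [Derivation.leibniz, smul_eq_mul, derivative_X, map_sub, derivative_exp,
      derivative_one] at h
    linear_combination h
  -- after multiplying by `X ^ 2` this is `B'(X) (e^X - 1) = X e^X`
  refine mul_left_cancel₀ (pow_ne_zero 2 X_ne_zero) ?_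
  rw [show X ^ 2 * (expSubOneDivX * d⁄dX ℚ logExpSubOneDivX) =
    (X * expSubOneDivX) * (X * d⁄dX ℚ logExpSubOneDivX) by ring,
    X_mul_expSubOneDivX, X_mul_derivative_logExpSubOneDivX]
  linear_combination X * hE - bernoulli'PowerSeries_mul_exp_sub_one ℚ - X_mul_expSubOneDivX

theorem expSubOneDivX_eq_exp_subst : expSubOneDivX = (exp ℚ).subst logExpSubOneDivX :=
  eq_exp_subst_of_derivative_eq_mul (by simp [logExpSubOneDivX]) (by simp [expSubOneDivX])
    derivative_expSubOneDivX

theorem coeff_exp_sub_one_pow (n k : ℕ) :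
    (n ! : ℚ) * coeff n ((exp ℚ - 1) ^ k) = k ! * stirlingSecond n k := by
  induction n generalizing k with
  | zero => cases k <;> simp
  | succ n ih =>
    cases k with
    | zero => simp [coeff_one]
    | succ k =>
      have hd : d⁄dX ℚ ((exp ℚ - 1) ^ (k + 1)) =
          C ((k : ℚ) + 1) * ((exp ℚ - 1) ^ k + (exp ℚ - 1) ^ (k + 1)) := by
        rw [derivative_pow, map_sub, derivative_exp, derivative_one, ← map_natCast C]
        push_cast
        ring
      have h := congrArg (coeff n) hd
      rw [coeff_derivative, coeff_C_mul, map_add] at h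
      have h1 := ih k
      have h2 := ih (k + 1)
      simp only [Nat.factorial_succ, stirlingSecond_succ_succ] at h2 ⊢
      push_cast at h h2 ⊢
      linear_combination (n ! : ℚ) * h + ((k : ℚ) + 1) * h1 + ((k : ℚ) + 1) * h2

noncomputable def risingPoly (n : ℕ) : Polynomial ℚ :=
  ∏ i ∈ range n, (Polynomial.X + Polynomial.C ((i : ℚ) + 1))

theorem coeff_zero_risingPoly (n : ℕ) : (risingPoly n).coeff 0 = n ! := by
  induction n with
  | zero => simp [risingPoly]
  | succ n ih =>
    rw [risingPoly, prod_range_succ, Polynomial.mul_coeff_zero, ← risingPoly, ih]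
    simp [Nat.factorial_succ, mul_comm]

theorem coeff_one_risingPoly (n : ℕ) : (risingPoly n).coeff 1 = n ! * harmonic n := by
  induction n with
  | zero => simp [risingPoly, Polynomial.coeff_one]
  | succ n ih =>
    rw [risingPoly, prod_range_succ, Polynomial.coeff_one_mul, ← risingPoly, ih,
      coeff_zero_risingPoly, harmonic_succ]
    simp only [Polynomial.coeff_add, Polynomial.coeff_X_one, Polynomial.coeff_X_zero,
      Polynomial.coeff_C_zero, Polynomial.coeff_C_of_ne_zero one_ne_zero, factorial_succ]
    push_cast
    field_simp
    ring

theorem factorial_mul_eval_risingPoly (n k : ℕ) :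
    (k ! : ℚ) * (risingPoly n).eval (k : ℚ) = (k + n)! := by
  rw [← Nat.factorial_mul_ascFactorial, Nat.ascFactorial_eq_prod_range, risingPoly,
    Polynomial.eval_prod]
  push_cast
  simp only [Polynomial.eval_add, Polynomial.eval_X, Polynomial.eval_C]
  congr 1
  exact prod_congr rfl fun i _ => by ring

/-- `t · log ((e^X - 1) / X)`, with `t` the polynomial variable. -/
noncomputable def scaledLog : (Polynomial ℚ)⟦X⟧ :=
  C Polynomial.X * map Polynomial.C logExpSubOneDivX

theorem constantCoeff_scaledLog : constantCoeff scaledLog = 0 := by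
  simp [scaledLog, logExpSubOneDivX, ← coeff_zero_eq_constantCoeff_apply]

theorem coeff_scaledLog (m : ℕ) :
    coeff m scaledLog = Polynomial.X * Polynomial.C (coeff m logExpSubOneDivX) := by
  rw [scaledLog, coeff_C_mul, coeff_map]

theorem map_eval_scaledLog (k : ℕ) :
    map (Polynomial.evalRingHom (k : ℚ)) scaledLog = k • logExpSubOneDivX := by
  ext m
  rw [coeff_map, coeff_scaledLog, nsmul_eq_mul, ← map_natCast C k, coeff_C_mul]
  simp only [Polynomial.coe_evalRingHom, Polynomial.eval_mul, Polynomial.eval_X,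
    Polynomial.eval_C]

theorem eval_risingPoly_mul_coeff_exp_subst_scaledLog (n k : ℕ) :
    (risingPoly n * coeff n ((exp (Polynomial ℚ)).subst scaledLog)).eval (k : ℚ) =
      stirlingSecond (n + k) k := by
  have hE : (coeff n ((exp (Polynomial ℚ)).subst scaledLog)).eval (k : ℚ) =
      coeff (n + k) ((exp ℚ - 1) ^ k) := by
    rw [← Polynomial.coe_evalRingHom, ← coeff_map, map_exp_subst _ constantCoeff_scaledLog,
      map_eval_scaledLog, exp_subst_nsmul (by simp [logExpSubOneDivX]),
      ← expSubOneDivX_eq_exp_subst, ← X_mul_expSubOneDivX, mul_pow, coeff_X_pow_mul']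
    simp
  rw [Polynomial.eval_mul, hE]
  refine mul_left_cancel₀ (Nat.cast_ne_zero.mpr k.factorial_ne_zero : (k ! : ℚ) ≠ 0) ?_
  rw [← mul_assoc, factorial_mul_eval_risingPoly, add_comm k n, coeff_exp_sub_one_pow]

theorem coeff_exp_subst_powerSumLog (n : ℕ) :
    coeff n ((exp (Polynomial ℚ)).subst powerSumLog) =
      risingPoly n * coeff n ((exp (Polynomial ℚ)).subst scaledLog) := by
  refine Polynomial.eq_of_infinite_eval_eq _ _ <|
    Set.infinite_of_injective_forall_mem Nat.cast_injective fun k : ℕ => ?_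
  simp only [Set.mem_ofPred_eq, eval_coeff_exp_subst_powerSumLog,
    eval_risingPoly_mul_coeff_exp_subst_scaledLog]

theorem coeff_two_coeff_exp_subst_powerSumLog {n : ℕ} (hn : n ≠ 0) :
    (coeff n ((exp (Polynomial ℚ)).subst powerSumLog)).coeff 2 = bernoulli' (n - 1) / 2 +
      2⁻¹ * ∑ p ∈ antidiagonal n, bernoulli' p.1 / p.1 * (bernoulli' p.2 / p.2) := by
  have h0 (j : ℕ) : (coeff j powerSumLog).coeff 0 = 0 := by
    simp [powerSumLog, coeff_zero_powerSumPoly]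
  rw [coeff_two_coeff_exp_subst constantCoeff_powerSumLog h0]
  simp only [powerSumLog, coeff_mk, Polynomial.coeff_C_mul, coeff_one_powerSumPoly,
    coeff_two_powerSumPoly (Nat.one_le_iff_ne_zero.mpr hn), smul_eq_mul]
  field_simp

theorem coeff_two_risingPoly_mul_coeff_exp_subst_scaledLog {n : ℕ} (hn : n ≠ 0) :
    (risingPoly n * coeff n ((exp (Polynomial ℚ)).subst scaledLog)).coeff 2 =
      n ! * (2⁻¹ * ∑ p ∈ antidiagonal n,
        coeff p.1 logExpSubOneDivX * coeff p.2 logExpSubOneDivX) +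
      n ! * harmonic n * coeff n logExpSubOneDivX := by
  have h0 (j : ℕ) : (coeff j scaledLog).coeff 0 = 0 := by simp [coeff_scaledLog]
  rw [Polynomial.coeff_two_mul, coeff_zero_coeff_exp_subst constantCoeff_scaledLog h0 hn,
    coeff_one_coeff_exp_subst constantCoeff_scaledLog h0,
    coeff_two_coeff_exp_subst constantCoeff_scaledLog h0, coeff_zero_risingPoly,
    coeff_one_risingPoly]
  simp [coeff_scaledLog]

theorem factorial_mul_coeff_mul_coeff_logExpSubOneDivX {n : ℕ} {p : ℕ × ℕ}
    (hp : p ∈ antidiagonal n) :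
    (n ! : ℚ) * (coeff p.1 logExpSubOneDivX * coeff p.2 logExpSubOneDivX) =
      n.choose p.1 * (bernoulli' p.1 / p.1 * (bernoulli' p.2 / p.2)) := by
  rw [HasAntidiagonal.mem_antidiagonal] at hp
  subst hp
  have h : ((p.1 + p.2)! : ℚ) = (p.1 + p.2).choose p.1 * p.1 ! * p.2 ! := by
    rw [add_comm p.1 p.2, mul_right_comm]
    exact_mod_cast (Nat.add_choose_mul_factorial_mul_factorial p.2 p.1).symm
  simp only [logExpSubOneDivX, coeff_mk, div_mul_eq_div_div]
  generalize bernoulli' p.1 / p.1 = a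
  generalize bernoulli' p.2 / p.2 = b
  field_simp
  rw [h]
  ring

/-- The terms with `p.1 = 0` or `p.2 = 0` vanish, since `x / 0 = 0`. -/
theorem miki_identity_antidiagonal {n : ℕ} (hn : n ≠ 0) :
    bernoulli' (n - 1) + ∑ p ∈ antidiagonal n,
      (1 - n.choose p.1) * (bernoulli' p.1 / p.1 * (bernoulli' p.2 / p.2)) =
      2 * harmonic n * bernoulli' n / n := by
  have h := congrArg (Polynomial.coeff · 2) (coeff_exp_subst_powerSumLog n)
  simp only [coeff_two_coeff_exp_subst_powerSumLog hn,
    coeff_two_risingPoly_mul_coeff_exp_subst_scaledLog hn] at h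
  have hL : (n ! : ℚ) * coeff n logExpSubOneDivX = bernoulli' n / n := by
    simp only [logExpSubOneDivX, coeff_mk]
    field_simp
  have hsum : (n ! : ℚ) * ∑ p ∈ antidiagonal n,
      coeff p.1 logExpSubOneDivX * coeff p.2 logExpSubOneDivX =
      ∑ p ∈ antidiagonal n, n.choose p.1 * (bernoulli' p.1 / p.1 * (bernoulli' p.2 / p.2)) := by
    rw [mul_sum]
    exact sum_congr rfl fun p hp => factorial_mul_coeff_mul_coeff_logExpSubOneDivX hp
  simp only [sub_mul, one_mul, sum_sub_distrib]
  linear_combination 2 * h + hsum + 2 * harmonic n * hL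

theorem bernoulli'_sub_one_eq_zero {n : ℕ} (hn : Even n) (h2 : 2 < n) : bernoulli' (n - 1) = 0 :=
  bernoulli'_eq_zero_of_odd (Nat.Even.sub_odd (by omega) hn odd_one) (by omega)

theorem sum_antidiagonal_eq_sum_Icc_of_even {n : ℕ} (hn : Even n) (h2 : 2 < n) :
    ∑ p ∈ antidiagonal n, (1 - n.choose p.1) * (bernoulli' p.1 / p.1 * (bernoulli' p.2 / p.2)) =
      ∑ k ∈ Icc 2 (n - 2),
        (1 - n.choose k) * (bernoulli' k / k * (bernoulli' (n - k) / (n - k : ℕ))) := by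
  have hvanish (i j : ℕ) (hij : i + j = n) (hi : i ≤ 1) :
      bernoulli' i / i * (bernoulli' j / j) = 0 := by
    interval_cases i
    · simp
    · simp [show j = n - 1 by omega, bernoulli'_sub_one_eq_zero hn h2]
  refine Finset.Nat.sum_antidiagonal_eq_sum_Icc fun p hp hp1 => ?_
  rw [HasAntidiagonal.mem_antidiagonal] at hp
  rcases hp1 with h | h
  · rw [hvanish p.1 p.2 hp h, mul_zero]
  · rw [mul_comm (_ / _), hvanish p.2 p.1 (by omega) h, mul_zero]

end Miki

/-- Miki's identity: for even `n ≥ 4`,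
`2·H_n·B_n = ∑_{k=2}^{n-2} (n/(k(n-k)))·(1 - C(n,k))·B_k·B_{n-k}`. -/
theorem miki_identity (n : ℕ) (hn : Even n) (h4 : 4 ≤ n) :
    2 * (∑ j ∈ Finset.Icc 1 n, (1 : ℚ) / j) * bernoulli n =
      ∑ k ∈ Finset.Icc 2 (n - 2),
        ((n : ℚ) / ((k : ℚ) * ((n : ℚ) - (k : ℚ)))) * (1 - (n.choose k : ℚ)) *
          bernoulli k * bernoulli (n - k) := by
  have key := Miki.miki_identity_antidiagonal (n := n) (by omega)
  rw [Miki.bernoulli'_sub_one_eq_zero hn (by omega), zero_add,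
    Miki.sum_antidiagonal_eq_sum_Icc_of_even hn (by omega)] at key
  simp only [one_div, ← harmonic_eq_sum_Icc, bernoulli_eq_bernoulli'_of_ne_one (by omega : n ≠ 1)]
  calc 2 * harmonic n * bernoulli' n = n * (2 * harmonic n * bernoulli' n / n) := by
        field_simp
    _ = _ := by
        rw [← key, mul_sum]
        refine sum_congr rfl fun k hk => ?_
        rw [mem_Icc] at hk
        rw [bernoulli_eq_bernoulli'_of_ne_one (by omega : k ≠ 1),
          bernoulli_eq_bernoulli'_of_ne_one (by omega : n - k ≠ 1), Nat.cast_sub (by omega)]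
        simp only [div_eq_mul_inv, mul_inv]
        ring
end
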